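/- Let f : (V → Bool) → Bool over a finite set V of Boolean variables be computed by a complete OBDD of width w with variable order π, and let X ⊆ V. Then the existential projection ∃X.f, defined on assignments σ of V \ X by (∃X.f)(σ) = true iff there exists an assignment ρ of X with f(σ ∪ ρ) = true, is computed by a complete OBDD of width at most 2^w over the variables V \ X whose variable order is the restriction of π to V \ X. -/

import Mathlib

/-- A complete OBDD of width (at most) `w` over a set `V` of variables, with variable
order `ord` (listing the variables as the 1st, …, `n`th), modeled as a layered branching
program: state sets `S i` of cardinality at most `w`, a start state, transition
functions, and an accepting predicate on the last layer.  At layer `k` it reads the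
value of the variable `ord k`. -/
structure OBDDv (V : Type*) (n w : ℕ) where
  ord : Fin n ≃ V
  S : Fin (n + 1) → Type
  finS : ∀ i, Fintype (S i)
  card_le : ∀ i, @Fintype.card (S i) (finS i) ≤ w
  start : S ⟨0, Nat.succ_pos n⟩
  trans : (k : ℕ) → (h : k < n) → S ⟨k, Nat.lt_succ_of_lt h⟩ → Bool →
    S ⟨k + 1, Nat.succ_lt_succ h⟩
  accept : S ⟨n, Nat.lt_succ_self n⟩ → Bool

/-- The state reached after reading the first `k` variables of the order. -/
def OBDDv.stateAt {V : Type*} {n w : ℕ} (M : OBDDv V n w) (τ : V → Bool) :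
    (k : ℕ) → (h : k ≤ n) → M.S ⟨k, Nat.lt_succ_of_le h⟩
  | 0, _ => M.start
  | k + 1, h =>
    M.trans k (Nat.lt_of_succ_le h) (M.stateAt τ k (Nat.le_of_succ_le h))
      (τ (M.ord ⟨k, Nat.lt_of_succ_le h⟩))

/-- The function computed by the OBDD. -/
def OBDDv.eval {V : Type*} {n w : ℕ} (M : OBDDv V n w) (τ : V → Bool) : Bool :=
  M.accept (M.stateAt τ n (Nat.le_refl n))

noncomputable section Aux

def bdecide (p : Prop) : Bool := @decide p (Classical.propDecidable p)

lemma bdecide_iff (p : Prop) : bdecide p = true ↔ p :=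
  @decide_eq_true_iff p (Classical.propDecidable p)

def OBDDv.tpt {V : Type*} {n w : ℕ} (M : OBDDv V n w) {i j : Fin (n + 1)} (h : i = j)
    (A : M.S i → Bool) : M.S j → Bool := h ▸ A

lemma OBDDv.tpt_spec {V : Type*} {n w : ℕ} (M : OBDDv V n w) {i j : Fin (n + 1)} (h : i = j)
    (A : M.S i → Bool) (P : ∀ k : Fin (n + 1), M.S k → Prop)
    (hA : ∀ s, A s = true ↔ P i s) : ∀ s, M.tpt h A s = true ↔ P j s := by
  subst h; exact hA

def OBDDv.castS {V : Type*} {n w : ℕ} (M : OBDDv V n w) {i j : Fin (n + 1)} (h : i = j)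
    (s : M.S i) : M.S j := h ▸ s

lemma OBDDv.castS_stateAt {V : Type*} {n w : ℕ} (M : OBDDv V n w) {k m : ℕ}
    (hk : k ≤ n) (hm : m ≤ n) (hkm : k = m)
    (h : (⟨k, Nat.lt_succ_of_le hk⟩ : Fin (n + 1)) = ⟨m, Nat.lt_succ_of_le hm⟩)
    (ρ : V → Bool) :
    M.castS h (M.stateAt ρ k hk) = M.stateAt ρ m hm := by
  subst hkm; rfl

def OBDDv.ext {V : Type*} {n w : ℕ} (M : OBDDv V n w) :
    (k d : ℕ) → (h : k + d ≤ n) →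
    (M.S ⟨k, by omega⟩ → Bool) → (M.S ⟨k + d, by omega⟩ → Bool)
  | _, 0, _, A => A
  | k, d + 1, h, A => fun s => bdecide (∃ (s0 : M.S ⟨k + d, by omega⟩) (b : Bool), M.ext k d (by omega) A s0 = true ∧
      M.trans (k + d) (by omega) s0 b = s)

lemma OBDDv.stateAt_congr {V : Type*} {n w : ℕ} (M : OBDDv V n w) (ρ₁ ρ₂ : V → Bool) :
    ∀ (k : ℕ) (h : k ≤ n),
      (∀ i (hi : i < k), ρ₁ (M.ord ⟨i, by omega⟩) = ρ₂ (M.ord ⟨i, by omega⟩)) →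
      M.stateAt ρ₁ k h = M.stateAt ρ₂ k h
  | 0, _, _ => rfl
  | k + 1, h, hag => by
    have h1 := M.stateAt_congr ρ₁ ρ₂ k (by omega) (fun i hi => hag i (by omega))
    simp only [OBDDv.stateAt]
    rw [h1, hag k (by omega)]

lemma OBDDv.ext_spec {V : Type*} {n w : ℕ} (M : OBDDv V n w) (X : Set V) (τ : V → Bool) :
    ∀ (d k : ℕ) (h : k + d ≤ n)
      (hX : ∀ i, k ≤ i → i < k + d → ∀ (hi : i < n), M.ord ⟨i, hi⟩ ∈ X)
      (A : M.S ⟨k, by omega⟩ → Bool)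
      (hA : ∀ s, A s = true ↔ ∃ ρ, (∀ v, v ∉ X → ρ v = τ v) ∧ M.stateAt ρ k (by omega) = s)
      (s : M.S ⟨k + d, by omega⟩),
      M.ext k d h A s = true ↔
        ∃ ρ, (∀ v, v ∉ X → ρ v = τ v) ∧ M.stateAt ρ (k + d) h = s
  | 0, k, h, hX, A, hA, s => hA s
  | d + 1, k, h, hX, A, hA, s => by
    classical
    have ih := M.ext_spec X τ d k (by omega) (fun i h1 h2 hi => hX i h1 (by omega) hi) A hA
    have hst : ∀ (ρ : V → Bool) (h' : k + (d + 1) ≤ n),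
        M.stateAt ρ (k + (d + 1)) h' =
          M.trans (k + d) (by omega) (M.stateAt ρ (k + d) (by omega))
            (ρ (M.ord ⟨k + d, by omega⟩)) := fun ρ h' => rfl
    simp only [OBDDv.ext, bdecide_iff, hst]
    constructor
    · rintro ⟨s0, b, hs0, htr⟩
      obtain ⟨ρ, hag, hρ⟩ := (ih s0).mp hs0
      refine ⟨Function.update ρ (M.ord ⟨k + d, by omega⟩) b, ?_, ?_⟩
      · intro v hv
        have hxX : M.ord ⟨k + d, by omega⟩ ∈ X := hX (k + d) (by omega) (by omega) (by omega)
        have hne : v ≠ M.ord ⟨k + d, by omega⟩ := fun hvx => hv (hvx ▸ hxX)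
        rw [Function.update_of_ne hne, hag v hv]
      · have hcong : M.stateAt (Function.update ρ (M.ord ⟨k + d, by omega⟩) b)
            (k + d) (by omega) = M.stateAt ρ (k + d) (by omega) := by
          apply M.stateAt_congr
          intro i hi
          have hne : M.ord ⟨i, by omega⟩ ≠ M.ord ⟨k + d, by omega⟩ := by
            intro hcon
            have := M.ord.injective hcon
            simp only [Fin.mk.injEq] at this
            omega
          rw [Function.update_of_ne hne]
        rw [hcong, hρ, Function.update_self]
        exact htr
    · rintro ⟨ρ, hag, hρ⟩
      exact ⟨M.stateAt ρ (k + d) (by omega), ρ (M.ord ⟨k + d, by omega⟩),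
        (ih _).mpr ⟨ρ, hag, rfl⟩, hρ⟩

def posN {n' : ℕ} (n : ℕ) (f : Fin n' → Fin n) (j : ℕ) : ℕ :=
  if h : j < n' then (f ⟨j, h⟩).val else n

lemma posN_le {n' n : ℕ} (f : Fin n' → Fin n) (j : ℕ) : posN n f j ≤ n := by
  unfold posN; split
  · exact le_of_lt (f _).isLt
  · exact le_refl n

lemma posN_lt_succ {n' n : ℕ} {f : Fin n' → Fin n} (hmono : StrictMono f) {j : ℕ}
    (hj : j < n') : posN n f j < posN n f (j + 1) := by
  unfold posN
  rw [dif_pos hj]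
  split
  · exact hmono (by simp [Fin.lt_def])
  · exact (f _).isLt

def OBDDv.project {V : Type*} {n w : ℕ} (M : OBDDv V n w) (X : Set V) (n' : ℕ)
    (f : Fin n' → Fin n) (hmono : StrictMono f) (g : Fin n' ≃ {v : V // v ∉ X}) :
    OBDDv {v : V // v ∉ X} n' (2 ^ w) where
  ord := g
  S := fun i => M.S ⟨posN n f i.1, Nat.lt_succ_of_le (posN_le f i.1)⟩ → Bool
  finS := fun i =>
    @Pi.instFintype (M.S ⟨posN n f i.1, Nat.lt_succ_of_le (posN_le f i.1)⟩) (fun _ => Bool)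
      (Classical.decEq _) (M.finS _) (fun _ => Bool.fintype)
  card_le := by
    intro i
    have h1 : @Fintype.card _
        (@Pi.instFintype (M.S ⟨posN n f i.1, Nat.lt_succ_of_le (posN_le f i.1)⟩) (fun _ => Bool)
          (Classical.decEq _) (M.finS _) (fun _ => Bool.fintype)) =
        2 ^ @Fintype.card (M.S ⟨posN n f i.1, Nat.lt_succ_of_le (posN_le f i.1)⟩)
          (M.finS _) := by
      rw [@Fintype.card_fun _ _ (Classical.decEq _) (M.finS _) Bool.fintype]
      simp
    exact le_trans (le_of_eq h1) (Nat.pow_le_pow_right (by norm_num) (M.card_le _))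
  start := M.tpt (Fin.ext (Nat.zero_add _))
    (M.ext 0 (posN n f 0) (by simpa using posN_le f 0)
      (fun s => bdecide (s = M.start)))
  trans := fun k hk A b => by
    have hlt : posN n f k < posN n f (k + 1) := posN_lt_succ hmono hk
    have hle : posN n f (k + 1) ≤ n := posN_le f (k + 1)
    have hkn : posN n f k < n := lt_of_lt_of_le hlt hle
    exact M.tpt (i := ⟨posN n f k + 1 + (posN n f (k + 1) - (posN n f k + 1)), by omega⟩)
      (Fin.ext (by simp only []; omega))
      (M.ext (posN n f k + 1) (posN n f (k + 1) - (posN n f k + 1)) (by omega)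
        (fun s => bdecide (∃ s0, A s0 = true ∧ M.trans (posN n f k) hkn s0 b = s)))
  accept := fun A => bdecide (∃ s, A s = true ∧
    M.accept (M.castS (Fin.ext (dif_neg (lt_irrefl n'))) s) = true)

theorem OBDDv.project_spec {V : Type*} {n w : ℕ} (M : OBDDv V n w) (X : Set V) (n' : ℕ)
    (f : Fin n' → Fin n) (hmono : StrictMono f) (g : Fin n' ≃ {v : V // v ∉ X})
    (hg : ∀ j, (g j).val = M.ord (f j))
    (hcover : ∀ (i : ℕ) (hi : i < n), M.ord ⟨i, hi⟩ ∉ X → ∃ j : Fin n', (f j).val = i)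
    (τ : V → Bool) :
    ∀ (j : ℕ) (hj : j ≤ n')
      (s : M.S ⟨posN n f j, Nat.lt_succ_of_le (posN_le f j)⟩),
      ((M.project X n' f hmono g).stateAt (fun v => τ v.val) j hj) s = true ↔
        ∃ ρ, (∀ v, v ∉ X → ρ v = τ v) ∧
          M.stateAt ρ (posN n f j) (posN_le f j) = s := by
  intro j
  induction j with
  | zero =>
    intro hj s
    refine M.tpt_spec _ _
      (fun i s => ∃ ρ, (∀ v, v ∉ X → ρ v = τ v) ∧
        M.stateAt ρ i.1 (Nat.lt_succ_iff.mp i.2) = s) ?_ s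
    refine M.ext_spec X τ (posN n f 0) 0 (by simpa using posN_le f 0) ?_ _ ?_
    · intro i _ hilt hi
      by_contra hnot
      obtain ⟨j', hj'⟩ := hcover i hi hnot
      have h0n' : 0 < n' := lt_of_le_of_lt (Nat.zero_le _) j'.isLt
      have hmn : (f ⟨0, h0n'⟩).val ≤ (f j').val :=
        hmono.monotone (by simp [Fin.le_def])
      have hp0 : posN n f 0 = (f ⟨0, h0n'⟩).val := dif_pos h0n'
      omega
    · intro s0
      rw [bdecide_iff]
      constructor
      · intro hs0
        exact ⟨τ, fun _ _ => rfl, hs0.symm⟩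
      · rintro ⟨ρ, _, hρ⟩
        exact hρ.symm
  | succ j ih =>
    intro hj s
    have hjn : j < n' := Nat.lt_of_succ_le hj
    have hlt : posN n f j < posN n f (j + 1) := posN_lt_succ hmono hjn
    have hle : posN n f (j + 1) ≤ n := posN_le f (j + 1)
    have hkn : posN n f j < n := lt_of_lt_of_le hlt hle
    have hst : (M.project X n' f hmono g).stateAt (fun v => τ v.val) (j + 1) hj =
        (M.project X n' f hmono g).trans j hjn
          ((M.project X n' f hmono g).stateAt (fun v => τ v.val) j (le_of_lt hjn))
          ((fun v => τ v.val) ((M.project X n' f hmono g).ord ⟨j, hjn⟩)) := rfl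
    rw [hst]
    refine M.tpt_spec _ _
      (fun i s => ∃ ρ, (∀ v, v ∉ X → ρ v = τ v) ∧
        M.stateAt ρ i.1 (Nat.lt_succ_iff.mp i.2) = s) ?_ s
    refine M.ext_spec X τ (posN n f (j + 1) - (posN n f j + 1)) (posN n f j + 1)
      (by omega) ?_ _ ?_
    · -- the skipped positions are in X
      intro i h1 h2 hi
      by_contra hnot
      obtain ⟨j', hj'⟩ := hcover i hi hnot
      have hpj : posN n f j = (f ⟨j, hjn⟩).val := dif_pos hjn
      have hmj : j < j'.val := by
        have : (⟨j, hjn⟩ : Fin n') < j' :=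
          hmono.lt_iff_lt.mp (by rw [Fin.lt_def]; omega)
        rw [Fin.lt_def] at this
        exact this
      have hup : j'.val < j + 1 := by
        by_cases h' : j + 1 < n'
        · have hpj1 : posN n f (j + 1) = (f ⟨j + 1, h'⟩).val := dif_pos h'
          have : j' < (⟨j + 1, h'⟩ : Fin n') :=
            hmono.lt_iff_lt.mp (by rw [Fin.lt_def]; omega)
          rw [Fin.lt_def] at this
          exact this
        · have : j + 1 = n' := by omega
          have := j'.isLt
          omega
      omega
    · -- one transition step
      intro s0
      have hfj : (⟨posN n f j, hkn⟩ : Fin n) = f ⟨j, hjn⟩ := Fin.ext (dif_pos hjn)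
      have hordX : M.ord (f ⟨j, hjn⟩) ∉ X := by
        rw [← hg ⟨j, hjn⟩]
        exact (g ⟨j, hjn⟩).2
      have hb : ∀ ρ : V → Bool, (∀ v, v ∉ X → ρ v = τ v) →
          ρ (M.ord ⟨posN n f j, hkn⟩) =
            (fun v => τ v.val) ((M.project X n' f hmono g).ord ⟨j, hjn⟩) := by
        intro ρ hag
        show ρ (M.ord ⟨posN n f j, hkn⟩) = τ (g ⟨j, hjn⟩).val
        rw [hfj, hg ⟨j, hjn⟩, hag _ hordX]
      have hstep : ∀ (ρ : V → Bool) (h' : posN n f j + 1 ≤ n),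
          M.stateAt ρ (posN n f j + 1) h' =
            M.trans (posN n f j) hkn (M.stateAt ρ (posN n f j) (by omega))
              (ρ (M.ord ⟨posN n f j, hkn⟩)) := fun ρ h' => rfl
      rw [bdecide_iff]
      constructor
      · rintro ⟨s1, hs1, htr⟩
        obtain ⟨ρ, hag, hρ⟩ := (ih (le_of_lt hjn) s1).mp hs1
        refine ⟨ρ, hag, ?_⟩
        rw [hstep ρ (by omega), hρ, hb ρ hag]
        exact htr
      · rintro ⟨ρ, hag, hρ⟩
        refine ⟨M.stateAt ρ (posN n f j) (posN_le f j), (ih (le_of_lt hjn) _).mpr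
          ⟨ρ, hag, rfl⟩, ?_⟩
        rw [← hρ, hstep ρ (by omega), hb ρ hag]

/-- If `f` is computed by a complete OBDD of width `w` with variable order `π` over
variables `V`, and `X ⊆ V`, then the existential projection `∃X.f` is computed by a
complete OBDD of width at most `2^w` over the variables `V \ X` whose variable order is
the restriction of `π` to `V \ X`.  (`(∃X.f)(σ) = true` iff `f(σ ∪ ρ) = true` for some
assignment `ρ` of `X`, phrased here as: there is `ρ : V → Bool` agreeing with `σ`
outside `X` on which `f` is true.) -/
theorem obdd_existential_projection (V : Type*) [Fintype V] (n w : ℕ)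
    (M : OBDDv V n w) (X : Set V) :
    ∃ (n' : ℕ) (M' : OBDDv {v : V // v ∉ X} n' (2 ^ w)),
      StrictMono (fun i : Fin n' => M.ord.symm (M'.ord i).val) ∧
      ∀ τ : V → Bool,
        (M'.eval (fun v => τ v.val) = true ↔
          ∃ ρ : V → Bool, (∀ v, v ∉ X → ρ v = τ v) ∧ M.eval ρ = true) := by
  classical
  let T := {k : Fin n // M.ord k ∉ X}
  let e : Fin (Fintype.card T) ≃o T := monoEquivOfFin T rfl
  let f : Fin (Fintype.card T) → Fin n := fun j => ((e j : T) : Fin n)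
  have hmono : StrictMono f := fun a b hab => Subtype.coe_lt_coe.mpr (e.strictMono hab)
  let g : Fin (Fintype.card T) ≃ {v : V // v ∉ X} :=
    e.toEquiv.trans (M.ord.subtypeEquiv fun k => Iff.rfl)
  have hg : ∀ j, (g j).val = M.ord (f j) := fun j => rfl
  have hcover : ∀ (i : ℕ) (hi : i < n), M.ord ⟨i, hi⟩ ∉ X →
      ∃ j : Fin (Fintype.card T), (f j).val = i := by
    intro i hi hnot
    refine ⟨e.symm ⟨⟨i, hi⟩, hnot⟩, ?_⟩
    show ((e (e.symm ⟨⟨i, hi⟩, hnot⟩) : T) : Fin n).val = i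
    rw [e.apply_symm_apply]
  refine ⟨Fintype.card T, M.project X _ f hmono g, ?_, ?_⟩
  · have hfun : (fun i : Fin (Fintype.card T) =>
        M.ord.symm (((M.project X _ f hmono g).ord i).val)) = f := by
      funext i
      show M.ord.symm ((g i).val) = f i
      rw [hg i, Equiv.symm_apply_apply]
    rw [hfun]
    exact hmono
  · intro τ
    have hn : posN n f (Fintype.card T) = n := dif_neg (lt_irrefl _)
    have heq : (⟨posN n f (Fintype.card T),
        Nat.lt_succ_of_le (posN_le f (Fintype.card T))⟩ : Fin (n + 1)) =
        ⟨n, Nat.lt_succ_self n⟩ := Fin.ext hn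
    have heval : (M.project X _ f hmono g).eval (fun v => τ v.val) =
        bdecide (∃ s, (M.project X _ f hmono g).stateAt (fun v => τ v.val)
          (Fintype.card T) (le_refl _) s = true ∧
          M.accept (M.castS heq s) = true) := rfl
    rw [heval, bdecide_iff]
    constructor
    · rintro ⟨s, hs, hacc⟩
      obtain ⟨ρ, hag, hρ⟩ :=
        (M.project_spec X _ f hmono g hg hcover τ _ (le_refl _) s).mp hs
      refine ⟨ρ, hag, ?_⟩
      have hcast := M.castS_stateAt (posN_le f (Fintype.card T)) (le_refl n) hn heq ρ
      show M.accept (M.stateAt ρ n (le_refl n)) = true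
      rw [← hcast, hρ]
      exact hacc
    · rintro ⟨ρ, hag, hev⟩
      refine ⟨M.stateAt ρ (posN n f (Fintype.card T)) (posN_le f _),
        (M.project_spec X _ f hmono g hg hcover τ _ (le_refl _) _).mpr ⟨ρ, hag, rfl⟩, ?_⟩
      rw [M.castS_stateAt (posN_le f (Fintype.card T)) (le_refl n) hn heq ρ]
      exact hev

end Aux
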